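/- Let F(x) = −∫_{B(x,r)} φ(q) dq for an integrable φ : ℝ² → ℝ and fixed r > 0. If φ is continuous, then F is differentiable and ∇F(x) = −∫₀^{2π} (cos θ, sin θ)·φ(x + r(cos θ, sin θ))·r dθ. -/

import Mathlib

/-!
By Fubini, the disk is a union of horizontal chords `{(s, b + t) : |s - a| < √(r² - t²)}`.
Moving the centre horizontally only moves the two endpoints of each chord, so the fundamental
theorem of calculus and differentiation under the integral give the first partial derivative of
the mass as `∫_{-r}^{r} (φ(right end) - φ(left end)) dt`; the substitution `t = r sin θ` turns this
into `∫₀^{2π} r cos θ φ(x + r(cos θ, sin θ)) dθ`. Swapping the coordinates gives the second partial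
derivative, and both are continuous in the centre, so the mass is differentiable.
-/

open Real Metric MeasureTheory Set Filter Topology

noncomputable def halfChord (r t : ℝ) : ℝ := √(r ^ 2 - t ^ 2)

/-- The Euclidean disk; `Metric.ball` in `ℝ × ℝ` is a square for the sup metric. -/
def disk (p : ℝ × ℝ) (r : ℝ) : Set (ℝ × ℝ) := {q | (q.1 - p.1) ^ 2 + (q.2 - p.2) ^ 2 < r ^ 2}

lemma continuous_halfChord (r : ℝ) : Continuous (halfChord r) := by
  unfold halfChord; fun_prop

lemma halfChord_nonneg (r t : ℝ) : 0 ≤ halfChord r t := Real.sqrt_nonneg _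

lemma halfChord_eq_zero_of_sq_le {r t : ℝ} (h : r ^ 2 ≤ t ^ 2) : halfChord r t = 0 :=
  Real.sqrt_eq_zero'.2 (by linarith)

lemma halfChord_mul_sin {r : ℝ} (hr : 0 ≤ r) (θ : ℝ) : halfChord r (r * sin θ) = r * |cos θ| := by
  rw [halfChord, ← Real.sqrt_sq (by positivity : 0 ≤ r * |cos θ|)]
  congr 1
  rw [mul_pow, mul_pow, sq_abs]
  nlinarith [sin_sq_add_cos_sq θ]

lemma measurableSet_disk (p : ℝ × ℝ) (r : ℝ) : MeasurableSet (disk p r) :=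
  measurableSet_lt (by fun_prop) measurable_const

lemma mk_mem_disk_iff {a b r s y : ℝ} :
    (s, y) ∈ disk (a, b) r ↔ s ∈ Ioo (a - halfChord r (y - b)) (a + halfChord r (y - b)) := by
  rw [mem_Ioo, sub_lt_comm, ← sub_lt_iff_lt_add', ← abs_sub_lt_iff, halfChord,
    Real.lt_sqrt (abs_nonneg _), sq_abs, lt_sub_iff_add_lt, sub_sq_comm]
  rfl

lemma setIntegral_disk_eq_integral_chords {ψ : ℝ × ℝ → ℝ} (hψ : Integrable ψ) {r : ℝ}
    (hr : 0 ≤ r) (p : ℝ × ℝ) :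
    ∫ q in disk p r, ψ q =
      ∫ t in -r..r, ∫ s in p.1 - halfChord r t..p.1 + halfChord r t, ψ (s, p.2 + t) := by
  obtain ⟨a, b⟩ := p
  set chord : ℝ → ℝ := fun y ↦
    ∫ s in a - halfChord r (y - b)..a + halfChord r (y - b), ψ (s, y) with hchord
  have hslice (y : ℝ) : ∫ s, (disk (a, b) r).indicator ψ (s, y) = chord y := by
    have hw := halfChord_nonneg r (y - b)
    have hpre : (fun s ↦ (s, y)) ⁻¹' disk (a, b) r =
        Ioo (a - halfChord r (y - b)) (a + halfChord r (y - b)) := by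
      ext s; exact mk_mem_disk_iff
    have hind (s : ℝ) : (disk (a, b) r).indicator ψ (s, y) =
        (Ioo (a - halfChord r (y - b)) (a + halfChord r (y - b))).indicator (ψ ⟨·, y⟩) s := by
      rw [← hpre]
      exact (indicator_comp_right _).symm
    simp only [hind, hchord]
    rw [integral_indicator measurableSet_Ioo, intervalIntegral.integral_of_le (by linarith),
      integral_Ioc_eq_integral_Ioo]
  have hsupp : Function.support chord ⊆ Ioc (b - r) (b + r) := by
    intro y hy
    by_contra hy'
    apply hy
    have : r ^ 2 ≤ (y - b) ^ 2 := by
      rw [mem_Ioc, not_and_or, not_lt, not_le] at hy'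
      rcases hy' with h | h <;> nlinarith
    simp only [hchord, halfChord_eq_zero_of_sq_le this, sub_zero, add_zero,
      intervalIntegral.integral_same]
  calc ∫ q in disk (a, b) r, ψ q
      = ∫ y, ∫ s, (disk (a, b) r).indicator ψ (s, y) := by
        rw [← integral_indicator (measurableSet_disk _ _), Measure.volume_eq_prod,
          integral_prod_symm _ ((hψ.indicator (measurableSet_disk _ _)))]
    _ = ∫ y in b - r..b + r, chord y := by
        simp_rw [hslice]; exact (intervalIntegral.integral_eq_integral_of_support_subset hsupp).symm
    _ = ∫ t in -r..r, chord (b + t) := by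
        rw [intervalIntegral.integral_comp_add_left, sub_eq_add_neg]
    _ = _ := by simp only [hchord, add_sub_cancel_left]

section Leibniz

variable {E : Type*} [NormedAddCommGroup E] [NormedSpace ℝ E]

lemma continuous_intervalIntegral_of_continuous_limits {X : Type*} [TopologicalSpace X]
    {f : X → ℝ → E} (hf : Continuous f.uncurry) {c d : X → ℝ} (hc : Continuous c)
    (hd : Continuous d) : Continuous fun x ↦ ∫ t in c x..d x, f x t := by
  have hint (x : X) (u v : ℝ) : IntervalIntegrable (f x) volume u v :=
    (hf.uncurry_left x).intervalIntegrable u v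
  have hsplit : (fun x ↦ ∫ t in c x..d x, f x t) =
      fun x ↦ (∫ t in 0..d x, f x t) - ∫ t in 0..c x, f x t :=
    funext fun x ↦ (intervalIntegral.integral_interval_sub_left (hint x 0 _) (hint x 0 _)).symm
  rw [hsplit]
  exact (intervalIntegral.continuous_parametric_intervalIntegral_of_continuous hf hd).sub
    (intervalIntegral.continuous_parametric_intervalIntegral_of_continuous hf hc)

lemma hasDerivAt_intervalIntegral_of_continuous_deriv {F F' : ℝ → ℝ → E}
    (hF : ∀ x, Continuous (F x)) (hF' : Continuous F'.uncurry)
    (hderiv : ∀ x t, HasDerivAt (F · t) (F' x t) x) (a b x₀ : ℝ) :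
    HasDerivAt (fun x ↦ ∫ t in a..b, F x t) (∫ t in a..b, F' x₀ t) x₀ := by
  obtain ⟨M, hM⟩ := (isCompact_closedBall x₀ 1 |>.prod isCompact_uIcc).exists_bound_of_continuousOn
    hF'.continuousOn
  refine (intervalIntegral.hasDerivAt_integral_of_dominated_loc_of_deriv_le
    (bound := fun _ ↦ M) (ball_mem_nhds x₀ one_pos)
    (Eventually.of_forall fun x ↦ (hF x).aestronglyMeasurable) ((hF x₀).intervalIntegrable _ _)
    (hF'.uncurry_left x₀).aestronglyMeasurable ?_ intervalIntegrable_const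
    (Eventually.of_forall fun t _ x _ ↦ hderiv x t)).2
  exact Eventually.of_forall fun t ht x hx ↦
    hM (x, t) ⟨ball_subset_closedBall hx, uIoc_subset_uIcc ht⟩

end Leibniz

lemma hasDerivAt_integral_chord {g : ℝ → ℝ} (hg : Continuous g) (w a : ℝ) :
    HasDerivAt (fun a ↦ ∫ s in a - w..a + w, g s) (g (a + w) - g (a - w)) a := by
  have hprim (u : ℝ) := (hg.integral_hasStrictDerivAt 0 u).hasDerivAt
  have hsub (a : ℝ) : ∫ s in a - w..a + w, g s = (∫ s in 0..a + w, g s) - ∫ s in 0..a - w, g s :=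
    (intervalIntegral.integral_interval_sub_left (hg.intervalIntegrable _ _)
      (hg.intervalIntegrable _ _)).symm
  simp_rw [hsub]
  exact (hprim (a + w)).comp_add_const.sub (hprim (a - w)).comp_sub_const

lemma hasDerivAt_integral_chords {ψ : ℝ × ℝ → ℝ} (hψ : Continuous ψ) (r b a : ℝ) :
    HasDerivAt (fun a ↦ ∫ t in -r..r, ∫ s in a - halfChord r t..a + halfChord r t, ψ (s, b + t))
      (∫ t in -r..r, (ψ (a + halfChord r t, b + t) - ψ (a - halfChord r t, b + t))) a := by
  have hw := continuous_halfChord r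
  refine hasDerivAt_intervalIntegral_of_continuous_deriv (fun x ↦ ?_) (by fun_prop)
    (fun x t ↦ hasDerivAt_integral_chord (by fun_prop) _ x) _ _ _
  exact continuous_intervalIntegral_of_continuous_limits (by fun_prop) (by fun_prop)
    (by fun_prop)

lemma integral_cos_mul_comp_right_semicircle {g : ℝ × ℝ → ℝ} (hg : Continuous g) {r : ℝ}
    (hr : 0 ≤ r) :
    ∫ θ in -(π / 2)..π / 2, r * cos θ * g (r * cos θ, r * sin θ) =
      ∫ t in -r..r, g (halfChord r t, t) := by
  have hsubst := intervalIntegral.integral_comp_mul_deriv (a := -(π / 2)) (b := π / 2)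
    (fun θ _ ↦ (hasDerivAt_sin θ).const_mul r)
    (by fun_prop : Continuous fun θ ↦ r * cos θ).continuousOn
    (by have hw := continuous_halfChord r; fun_prop : Continuous fun t ↦ g (halfChord r t, t))
  rw [sin_neg, sin_pi_div_two, mul_neg, mul_one] at hsubst
  rw [← hsubst]
  refine intervalIntegral.integral_congr fun θ hθ ↦ ?_
  rw [uIcc_of_le (by linarith [pi_pos])] at hθ
  simp only [Function.comp_apply, halfChord_mul_sin hr, abs_of_nonneg (cos_nonneg_of_mem_Icc hθ)]
  ring

lemma integral_cos_mul_comp_circle {g : ℝ × ℝ → ℝ} (hg : Continuous g) {r : ℝ} (hr : 0 ≤ r) :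
    ∫ θ in 0..2 * π, r * cos θ * g (r * cos θ, r * sin θ) =
      ∫ t in -r..r, (g (halfChord r t, t) - g (-halfChord r t, t)) := by
  set f := fun θ ↦ r * cos θ * g (r * cos θ, r * sin θ) with hf
  have hfc : Continuous f := by fun_prop
  have hper : Function.Periodic f (2 * π) := fun θ ↦ by simp [hf, cos_add_two_pi, sin_add_two_pi]
  have hleft : ∫ θ in π / 2..3 * π / 2, f θ = -∫ t in -r..r, g (-halfChord r t, t) := by
    have hreflect : ∫ θ in π / 2..3 * π / 2, f θ = ∫ θ in -(π / 2)..π / 2, f (π - θ) := by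
      rw [intervalIntegral.integral_comp_sub_left]; congr 1 <;> ring
    rw [hreflect, ← integral_cos_mul_comp_right_semicircle (g := fun q ↦ g (-q.1, q.2))
      (by fun_prop) hr, ← intervalIntegral.integral_neg]
    simp only [hf, cos_pi_sub, sin_pi_sub, neg_mul, mul_neg]
  have hchord : Continuous fun t ↦ (g (halfChord r t, t), g (-halfChord r t, t)) := by
    have hw := continuous_halfChord r; fun_prop
  calc ∫ θ in 0..2 * π, f θ = ∫ θ in -(π / 2)..3 * π / 2, f θ := by
        rw [← zero_add (2 * π), hper.intervalIntegral_add_eq 0 (-(π / 2))]; congr 1; ring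
    _ = (∫ θ in -(π / 2)..π / 2, f θ) + ∫ θ in π / 2..3 * π / 2, f θ :=
        (intervalIntegral.integral_add_adjacent_intervals (hfc.intervalIntegrable _ _)
          (hfc.intervalIntegrable _ _)).symm
    _ = _ := by
        rw [hleft, integral_cos_mul_comp_right_semicircle hg hr, ← sub_eq_add_neg,
          intervalIntegral.integral_sub (hchord.fst.intervalIntegrable _ _)
            (hchord.snd.intervalIntegrable _ _)]

lemma integral_sin_mul_comp_circle (g : ℝ × ℝ → ℝ) (r : ℝ) :
    ∫ θ in 0..2 * π, r * sin θ * g (r * cos θ, r * sin θ) =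
      ∫ θ in 0..2 * π, r * cos θ * g (r * sin θ, r * cos θ) := by
  set f := fun θ ↦ r * sin θ * g (r * cos θ, r * sin θ) with hf
  have hper : Function.Periodic f (2 * π) := fun θ ↦ by simp [hf, cos_add_two_pi, sin_add_two_pi]
  have hrot : ∫ θ in 0..2 * π, f (π / 2 - θ) = ∫ θ in 0..2 * π, f θ := by
    rw [intervalIntegral.integral_comp_sub_left, sub_zero]
    simpa only [sub_add_cancel, zero_add] using hper.intervalIntegral_add_eq (π / 2 - 2 * π) 0
  rw [← hrot]
  simp only [hf, sin_pi_div_two_sub, cos_pi_div_two_sub]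

/-- `∮_{∂B(p,r)} ψ n ds` with `n` the outer unit normal. -/
noncomputable def normalFlux (ψ : ℝ × ℝ → ℝ) (r : ℝ) (p : ℝ × ℝ) : ℝ × ℝ :=
  ∫ θ in 0..2 * π, (r * ψ (p + r • (cos θ, sin θ))) • (cos θ, sin θ)

section NormalFlux

variable {ψ : ℝ × ℝ → ℝ}

lemma continuous_normalFlux (hψ : Continuous ψ) (r : ℝ) : Continuous (normalFlux ψ r) :=
  intervalIntegral.continuous_parametric_intervalIntegral_of_continuous' (by fun_prop) _ _

lemma intervalIntegrable_normalFlux_integrand (hψ : Continuous ψ) (r : ℝ) (p : ℝ × ℝ) :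
    IntervalIntegrable (fun θ ↦ (r * ψ (p + r • (cos θ, sin θ))) • (cos θ, sin θ))
      volume 0 (2 * π) :=
  Continuous.intervalIntegrable (by fun_prop) _ _

lemma normalFlux_fst (hψ : Continuous ψ) (r : ℝ) (p : ℝ × ℝ) :
    (normalFlux ψ r p).1 = ∫ θ in 0..2 * π, r * cos θ * ψ (p.1 + r * cos θ, p.2 + r * sin θ) := by
  change ContinuousLinearMap.fst ℝ ℝ ℝ (normalFlux ψ r p) = _
  rw [normalFlux, ← (ContinuousLinearMap.fst ℝ ℝ ℝ).intervalIntegral_comp_comm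
      (intervalIntegrable_normalFlux_integrand hψ r p)]
  congr 1; ext θ
  simp only [ContinuousLinearMap.coe_fst', Prod.smul_mk, smul_eq_mul]
  exact mul_right_comm _ _ _

lemma normalFlux_snd (hψ : Continuous ψ) (r : ℝ) (p : ℝ × ℝ) :
    (normalFlux ψ r p).2 = ∫ θ in 0..2 * π, r * sin θ * ψ (p.1 + r * cos θ, p.2 + r * sin θ) := by
  change ContinuousLinearMap.snd ℝ ℝ ℝ (normalFlux ψ r p) = _
  rw [normalFlux, ← (ContinuousLinearMap.snd ℝ ℝ ℝ).intervalIntegral_comp_comm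
      (intervalIntegrable_normalFlux_integrand hψ r p)]
  congr 1; ext θ
  simp only [ContinuousLinearMap.coe_snd', Prod.smul_mk, smul_eq_mul]
  exact mul_right_comm _ _ _

lemma normalFlux_snd_eq_fst_swap (hψ : Continuous ψ) (r : ℝ) (p : ℝ × ℝ) :
    (normalFlux ψ r p).2 = (normalFlux (ψ ∘ Prod.swap) r p.swap).1 := by
  rw [normalFlux_snd hψ, normalFlux_fst (hψ.comp continuous_swap),
    integral_sin_mul_comp_circle (fun q ↦ ψ (p.1 + q.1, p.2 + q.2))]
  rfl

lemma setIntegral_disk_swap (ψ : ℝ × ℝ → ℝ) (r : ℝ) (a b : ℝ) :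
    ∫ q in disk (a, b) r, ψ q = ∫ q in disk (b, a) r, (ψ ∘ Prod.swap) q := by
  have hpre : Prod.swap ⁻¹' disk (a, b) r = disk (b, a) r := by
    ext q
    simp only [disk, mem_preimage, mem_ofPred_eq, Prod.fst_swap, Prod.snd_swap, add_comm]
  have hswap : MeasurePreserving Prod.swap (volume : Measure (ℝ × ℝ)) volume :=
    Measure.measurePreserving_swap
  rw [← hpre]
  exact (hswap.setIntegral_preimage_emb MeasurableEquiv.prodComm.measurableEmbedding ψ _).symm

variable {r : ℝ}

lemma hasDerivAt_setIntegral_disk_fst (hc : Continuous ψ) (hi : Integrable ψ) (hr : 0 ≤ r)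
    (a b : ℝ) : HasDerivAt (fun a ↦ ∫ q in disk (a, b) r, ψ q) (normalFlux ψ r (a, b)).1 a := by
  rw [normalFlux_fst hc, integral_cos_mul_comp_circle (g := fun q ↦ ψ (a + q.1, b + q.2))
    (by fun_prop) hr]
  simp_rw [setIntegral_disk_eq_integral_chords hi hr, ← sub_eq_add_neg]
  exact hasDerivAt_integral_chords hc r b a

lemma hasDerivAt_setIntegral_disk_snd (hc : Continuous ψ) (hi : Integrable ψ) (hr : 0 ≤ r)
    (a b : ℝ) : HasDerivAt (fun b ↦ ∫ q in disk (a, b) r, ψ q) (normalFlux ψ r (a, b)).2 b := by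
  simp_rw [setIntegral_disk_swap ψ r a, normalFlux_snd_eq_fst_swap hc]
  exact hasDerivAt_setIntegral_disk_fst (hc.comp continuous_swap) hi.swap hr b a

theorem hasStrictFDerivAt_setIntegral_disk (hc : Continuous ψ) (hi : Integrable ψ) (hr : 0 ≤ r)
    (p : ℝ × ℝ) :
    HasStrictFDerivAt (fun p ↦ ∫ q in disk p r, ψ q)
      ((ContinuousLinearMap.smulRight (1 : ℝ →L[ℝ] ℝ) (normalFlux ψ r p).1).coprod
        (ContinuousLinearMap.smulRight (1 : ℝ →L[ℝ] ℝ) (normalFlux ψ r p).2)) p := by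
  have hsmulRight : Continuous fun c : ℝ ↦ ContinuousLinearMap.smulRight (1 : ℝ →L[ℝ] ℝ) c := by
    simp_rw [ContinuousLinearMap.smulRight_one_eq_toSpanSingleton]
    exact ContinuousLinearMap.toSpanSingletonCLE.continuous
  have hflux := continuous_normalFlux hc r
  exact hasStrictFDerivAt_uncurry_coprod (f := fun a b ↦ ∫ q in disk (a, b) r, ψ q)
    (f₁ := fun a b ↦ ContinuousLinearMap.smulRight (1 : ℝ →L[ℝ] ℝ) (normalFlux ψ r (a, b)).1)
    (f₂ := fun a b ↦ ContinuousLinearMap.smulRight (1 : ℝ →L[ℝ] ℝ) (normalFlux ψ r (a, b)).2)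
    (Eventually.of_forall fun q ↦ (hasDerivAt_setIntegral_disk_fst hc hi hr q.1 q.2).hasFDerivAt)
    (Eventually.of_forall fun q ↦ (hasDerivAt_setIntegral_disk_snd hc hi hr q.1 q.2).hasFDerivAt)
    (hsmulRight.comp hflux.fst).continuousAt (hsmulRight.comp hflux.snd).continuousAt

end NormalFlux

noncomputable def euclideanToProd : EuclideanSpace ℝ (Fin 2) ≃L[ℝ] ℝ × ℝ :=
  (PiLp.continuousLinearEquiv 2 ℝ fun _ : Fin 2 ↦ ℝ).trans (ContinuousLinearEquiv.finTwoArrow ℝ ℝ)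

lemma euclideanToProd_apply (v : EuclideanSpace ℝ (Fin 2)) : euclideanToProd v = (v 0, v 1) := rfl

lemma measurePreserving_euclideanToProd : MeasurePreserving euclideanToProd :=
  (volume_preserving_finTwoArrow ℝ).comp (PiLp.volume_preserving_ofLp (Fin 2))

lemma euclideanToProd_preimage_disk {r : ℝ} (hr : 0 ≤ r) (x : EuclideanSpace ℝ (Fin 2)) :
    euclideanToProd ⁻¹' disk (euclideanToProd x) r = ball x r := by
  ext q
  rw [mem_preimage, mem_ball, EuclideanSpace.dist_eq, Fin.sum_univ_two,
    Real.sqrt_lt (by positivity) hr]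
  simp only [disk, mem_ofPred_eq, euclideanToProd_apply, Real.dist_eq, sq_abs]

lemma setIntegral_ball_eq_setIntegral_disk (φ : EuclideanSpace ℝ (Fin 2) → ℝ) {r : ℝ}
    (hr : 0 ≤ r) (x : EuclideanSpace ℝ (Fin 2)) :
    ∫ q in ball x r, φ q = ∫ q in disk (euclideanToProd x) r, φ (euclideanToProd.symm q) := by
  rw [← measurePreserving_euclideanToProd.setIntegral_preimage_emb
    euclideanToProd.toHomeomorph.measurableEmbedding, euclideanToProd_preimage_disk hr]
  simp only [ContinuousLinearEquiv.symm_apply_apply]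

lemma toDual_euclideanToProd_symm (w : ℝ × ℝ) :
    InnerProductSpace.toDual ℝ (EuclideanSpace ℝ (Fin 2)) (euclideanToProd.symm w) =
      ((ContinuousLinearMap.smulRight (1 : ℝ →L[ℝ] ℝ) w.1).coprod
        (ContinuousLinearMap.smulRight (1 : ℝ →L[ℝ] ℝ) w.2)).comp
        (euclideanToProd : EuclideanSpace ℝ (Fin 2) →L[ℝ] ℝ × ℝ) := by
  ext v
  have h0 : euclideanToProd.symm w 0 = w.1 := rfl
  have h1 : euclideanToProd.symm w 1 = w.2 := rfl
  simp [PiLp.inner_apply, Fin.sum_univ_two, euclideanToProd_apply, h0, h1]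

theorem gradient_of_neg_covered_mass
    (φ : EuclideanSpace ℝ (Fin 2) → ℝ) (hφ : Continuous φ)
    (hint : Integrable φ) (r : ℝ) (hr : 0 < r) (x : EuclideanSpace ℝ (Fin 2)) :
    let u : ℝ → EuclideanSpace ℝ (Fin 2) :=
      fun θ => (WithLp.equiv 2 (Fin 2 → ℝ)).symm ![Real.cos θ, Real.sin θ]
    HasGradientAt (fun x => -∫ q in ball x r, φ q)
      (-∫ θ in (0:ℝ)..(2 * π), (r * φ (x + r • u θ)) • u θ) x := by
  intro u
  set ψ : ℝ × ℝ → ℝ := φ ∘ euclideanToProd.symm with hψ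
  have hψc : Continuous ψ := hφ.comp euclideanToProd.symm.continuous
  have hψi : Integrable ψ := by
    rw [← measurePreserving_euclideanToProd.integrable_comp_emb
      euclideanToProd.toHomeomorph.measurableEmbedding]
    simpa [hψ, Function.comp_def] using hint
  have hflux : ∫ θ in 0..2 * π, (r * φ (x + r • u θ)) • u θ =
      euclideanToProd.symm (normalFlux ψ r (euclideanToProd x)) := by
    rw [normalFlux, ← ContinuousLinearEquiv.coe_coe,
      ← ContinuousLinearMap.intervalIntegral_comp_comm _
        (intervalIntegrable_normalFlux_integrand hψc r _)]
    refine intervalIntegral.integral_congr fun θ _ ↦ ?_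
    have hu : u θ = euclideanToProd.symm (cos θ, sin θ) := rfl
    simp only [hψ, hu, Function.comp_apply, ContinuousLinearEquiv.coe_coe, map_add, map_smul,
      ContinuousLinearEquiv.symm_apply_apply]
  have hderiv := ((hasStrictFDerivAt_setIntegral_disk hψc hψi hr.le
    (euclideanToProd x)).hasFDerivAt.comp x euclideanToProd.hasFDerivAt).neg
  have hmass : (fun y ↦ -∫ q in ball y r, φ q) =
      -(fun p ↦ ∫ q in disk p r, ψ q) ∘ euclideanToProd :=
    funext fun y ↦ congrArg Neg.neg (setIntegral_ball_eq_setIntegral_disk φ hr.le y)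
  rw [hasGradientAt_iff_hasFDerivAt, hflux, map_neg, toDual_euclideanToProd_symm, hmass]
  exact hderiv
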